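/- (ANOVA mean-zero property under independence.) Suppose μ is a product probability measure, i.e., the coordinates x₁,…,x_p are independent. Then for every nonempty v ⊆ {1,…,p} and every ℓ ∈ v, the component f_v satisfies E[f_v | σ(x_{∼ℓ})] = 0 almost everywhere; in particular E[f_v] = 0. -/

import Mathlib

open MeasureTheory ProbabilityTheory

/-- The sub-σ-algebra generated by the coordinates in `v`. -/
def coordSigma {p : ℕ} (Ω : Fin p → Type*) [∀ i, MeasurableSpace (Ω i)]
    (v : Finset (Fin p)) : MeasurableSpace (∀ i, Ω i) :=
  ⨆ i ∈ v, MeasurableSpace.comap (fun x : ∀ j, Ω j => x i) inferInstance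

/-- The recursively defined (generalized ANOVA) components `f_v`. -/
noncomputable def anovaComp {p : ℕ} {Ω : Fin p → Type*} [∀ i, MeasurableSpace (Ω i)]
    (μ : Measure (∀ i, Ω i)) (f : (∀ i, Ω i) → ℝ) : Finset (Fin p) → (∀ i, Ω i) → ℝ
  | v =>
    if v = ∅ then fun _ => ∫ x, f x ∂μ
    else μ[f | coordSigma Ω v] - ∑ w ∈ v.ssubsets.attach, anovaComp μ f w.1
  termination_by v => v.card
  decreasing_by exact Finset.card_lt_card (Finset.mem_ssubsets.mp w.2)

/-- Variance (`‖f - f₀‖₂²`). -/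
noncomputable def fVar {α : Type*} [MeasurableSpace α] (μ : Measure α) (f : α → ℝ) : ℝ :=
  ∫ x, (f x - ∫ y, f y ∂μ) ^ 2 ∂μ

/-- Covariance. -/
noncomputable def fCov {α : Type*} [MeasurableSpace α] (μ : Measure α) (g f : α → ℝ) : ℝ :=
  ∫ x, (g x - ∫ y, g y ∂μ) * (f x - ∫ y, f y ∂μ) ∂μ

/-- Sobol' index `S_v`. -/
noncomputable def sobolIndex {p : ℕ} {Ω : Fin p → Type*} [∀ i, MeasurableSpace (Ω i)]
    (μ : Measure (∀ i, Ω i)) (f : (∀ i, Ω i) → ℝ) (v : Finset (Fin p)) : ℝ :=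
  fCov μ (anovaComp μ f v) f / fVar μ f

/-- Total Sobol' index `T_u`. -/
noncomputable def totalSobolIndex {p : ℕ} {Ω : Fin p → Type*} [∀ i, MeasurableSpace (Ω i)]
    (μ : Measure (∀ i, Ω i)) (f : (∀ i, Ω i) → ℝ) (u : Finset (Fin p)) : ℝ :=
  ∑ v ∈ Finset.univ.powerset.filter (fun v => (v ∩ u).Nonempty), sobolIndex μ f v

/-!
Under a product measure the σ-algebras of disjoint sets of coordinates are independent, so
conditioning `E[f | σ(x_v)]` further on `σ(x_u)` gives `E[f | σ(x_{u ∩ v})]`: the coordinates in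
`u \ v` carry no information about `σ(x_v)`. Hence, by strong induction on `v`,
`E[f_v | σ(x_u)] = 0` whenever `v ⊄ u`: in `f_v = E[f | σ(x_v)] - ∑_{w ⊊ v} f_w` the components
with `w ⊄ u` vanish under conditioning by induction, those with `w ⊆ u` are `σ(x_u)`-measurable,
and the latter sum to `E[f | σ(x_{u ∩ v})]`. Take `u = ∼ℓ`, and integrate for `E[f_v] = 0`.
-/

theorem Finset.filter_ssubsets_subset_eq_powerset_inter {ι : Type*} [DecidableEq ι]
    {v u : Finset ι} (hvu : ¬ v ⊆ u) : {w ∈ v.ssubsets | w ⊆ u} = (u ∩ v).powerset := by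
  ext w
  simp only [Finset.mem_filter, Finset.mem_ssubsets, Finset.mem_powerset, Finset.subset_inter_iff]
  refine ⟨fun ⟨hwv, hwu⟩ => ⟨hwu, hwv.subset⟩, fun ⟨hwu, hwv⟩ => ⟨?_, hwu⟩⟩
  exact Finset.ssubset_iff_subset_ne.mpr ⟨hwv, by rintro rfl; exact hvu hwu⟩

namespace MeasurableSpace

variable {α : Type*} {m m' : MeasurableSpace α}

theorem isPiSystem_image2_inter :
    IsPiSystem (Set.image2 (· ∩ ·) {s | MeasurableSet[m] s} {t | MeasurableSet[m'] t}) := by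
  rintro _ ⟨A, hA, B, hB, rfl⟩ _ ⟨A', hA', B', hB', rfl⟩ -
  exact ⟨A ∩ A', hA.inter hA', B ∩ B', hB.inter hB', Set.inter_inter_inter_comm A A' B B'⟩

theorem sup_eq_generateFrom_image2_inter :
    m ⊔ m' = generateFrom (Set.image2 (· ∩ ·) {s | MeasurableSet[m] s}
      {t | MeasurableSet[m'] t}) := by
  refine le_antisymm (sup_le ?_ ?_) (generateFrom_le ?_)
  · exact fun s hs => measurableSet_generateFrom ⟨s, hs, .univ, .univ, Set.inter_univ s⟩
  · exact fun t ht => measurableSet_generateFrom ⟨.univ, .univ, t, ht, Set.univ_inter t⟩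
  · rintro _ ⟨A, hA, B, hB, rfl⟩
    exact (le_sup_left (a := m) _ hA).inter (le_sup_right (a := m) _ hB)

end MeasurableSpace

namespace ProbabilityTheory

variable {α : Type*} {m₁ m₂ m₃ mα : MeasurableSpace α} {μ : Measure α}

theorem Indep.setIntegral_inter_eq_mul (hm₁ : m₁ ≤ mα) (hm₃ : m₃ ≤ mα)
    (hindep : Indep m₁ m₃ μ) {g : α → ℝ} (hg : StronglyMeasurable[m₁] g)
    {A B : Set α} (hA : MeasurableSet[m₁] A) (hB : MeasurableSet[m₃] B) :
    ∫ x in A ∩ B, g x ∂μ = μ.real B * ∫ x in A, g x ∂μ := by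
  have hgA : Measurable[m₁] (A.indicator g) := hg.measurable.indicator hA
  rw [Set.inter_comm, ← setIntegral_indicator (hm₁ _ hA), ← integral_indicator (hm₁ _ hA)]
  exact Indep.setIntegral_eq_mul (f := id) hm₃ (indep_of_indep_of_le_right hindep.symm
    hgA.comap_le) (hgA.mono hm₁ le_rfl).aemeasurable hB aestronglyMeasurable_id

theorem condExp_sup_ae_eq_of_indep [IsFiniteMeasure μ] (hm₁ : m₁ ≤ mα) (hm₂₁ : m₂ ≤ m₁)
    (hm₃ : m₃ ≤ mα) (hindep : Indep m₁ m₃ μ) {g : α → ℝ} (hgi : Integrable g μ)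
    (hg : StronglyMeasurable[m₁] g) :
    μ[g | m₂ ⊔ m₃] =ᵐ[μ] μ[g | m₂] := by
  have hm₂ : m₂ ≤ mα := hm₂₁.trans hm₁
  have hm : m₂ ⊔ m₃ ≤ mα := sup_le hm₂ hm₃
  have hmeas : StronglyMeasurable[m₂ ⊔ m₃] (μ[g | m₂]) :=
    stronglyMeasurable_condExp.mono le_sup_left
  have hsetIntegral (s : Set α) (hs : MeasurableSet[m₂ ⊔ m₃] s) :
      ∫ x in s, μ[g | m₂] x ∂μ = ∫ x in s, g x ∂μ := by
    induction s, hs using MeasurableSpace.induction_on_inter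
      MeasurableSpace.sup_eq_generateFrom_image2_inter MeasurableSpace.isPiSystem_image2_inter with
    | empty => simp
    | basic _ hs =>
      obtain ⟨A, hA, B, hB, rfl⟩ := hs
      rw [hindep.setIntegral_inter_eq_mul hm₁ hm₃ hg (hm₂₁ _ hA) hB,
        (indep_of_indep_of_le_left hindep hm₂₁).setIntegral_inter_eq_mul hm₂ hm₃
          stronglyMeasurable_condExp hA hB, setIntegral_condExp hm₂ hgi hA]
    | compl t ht iht =>
      rw [setIntegral_compl (hm _ ht) integrable_condExp, setIntegral_compl (hm _ ht) hgi,
        integral_condExp hm₂, iht]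
    | iUnion u hud hu ihu =>
      rw [integral_iUnion (fun i => hm _ (hu i)) hud integrable_condExp.integrableOn,
        integral_iUnion (fun i => hm _ (hu i)) hud hgi.integrableOn, tsum_congr ihu]
  exact (ae_eq_condExp_of_forall_setIntegral_eq hm hgi
    (fun _ _ _ => integrable_condExp.integrableOn) (fun s hs _ => hsetIntegral s hs)
    hmeas.aestronglyMeasurable).symm

end ProbabilityTheory

section coordSigma

variable {p : ℕ} {Ω : Fin p → Type*} [∀ i, MeasurableSpace (Ω i)]

theorem coordSigma_le_pi (v : Finset (Fin p)) : coordSigma Ω v ≤ MeasurableSpace.pi :=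
  iSup₂_le fun i _ => (measurable_pi_apply i).comap_le

theorem coordSigma_mono {v w : Finset (Fin p)} (h : v ⊆ w) : coordSigma Ω v ≤ coordSigma Ω w :=
  biSup_mono h

@[simp]
theorem coordSigma_empty : coordSigma Ω (∅ : Finset (Fin p)) = ⊥ := by
  simp [coordSigma]

theorem coordSigma_union (v w : Finset (Fin p)) :
    coordSigma Ω (v ∪ w) = coordSigma Ω v ⊔ coordSigma Ω w := by
  simp only [coordSigma, Finset.mem_union, iSup_or, iSup_sup_eq]

theorem indep_coordSigma_pi (ν : ∀ i, Measure (Ω i)) [∀ i, IsProbabilityMeasure (ν i)]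
    {v w : Finset (Fin p)} (h : Disjoint v w) :
    Indep (coordSigma Ω v) (coordSigma Ω w) (Measure.pi ν) := by
  have hcoord : iIndep (fun i => MeasurableSpace.comap (fun x : ∀ j, Ω j => x i) inferInstance)
      (Measure.pi ν) :=
    (iIndepFun_iff_iIndep _ _ _).mp (iIndepFun_pi (X := fun _ => id) fun _ => aemeasurable_id)
  exact indep_iSup_of_disjoint (fun i => (measurable_pi_apply i).comap_le) hcoord
    (Finset.disjoint_coe.mpr h)

theorem condExp_condExp_coordSigma_pi (ν : ∀ i, Measure (Ω i)) [∀ i, IsProbabilityMeasure (ν i)]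
    (f : (∀ i, Ω i) → ℝ) (v w : Finset (Fin p)) :
    (Measure.pi ν)[(Measure.pi ν)[f | coordSigma Ω v] | coordSigma Ω w]
      =ᵐ[Measure.pi ν] (Measure.pi ν)[f | coordSigma Ω (w ∩ v)] := by
  have hsplit : coordSigma Ω w = coordSigma Ω (w ∩ v) ⊔ coordSigma Ω (w \ v) := by
    rw [← coordSigma_union, Finset.union_comm, Finset.sdiff_union_inter]
  rw [hsplit]
  have hwv : coordSigma Ω (w ∩ v) ≤ coordSigma Ω v := coordSigma_mono Finset.inter_subset_right
  exact (condExp_sup_ae_eq_of_indep (coordSigma_le_pi v) hwv (coordSigma_le_pi _)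
    (indep_coordSigma_pi ν Finset.disjoint_sdiff) integrable_condExp
    stronglyMeasurable_condExp).trans (condExp_condExp_of_le hwv (coordSigma_le_pi v))

end coordSigma

section anovaComp

variable {p : ℕ} {Ω : Fin p → Type*} [∀ i, MeasurableSpace (Ω i)]
  {μ : Measure (∀ i, Ω i)} {f : (∀ i, Ω i) → ℝ}

theorem anovaComp_empty : anovaComp μ f ∅ = fun _ => ∫ x, f x ∂μ := by
  rw [anovaComp, if_pos rfl]

theorem anovaComp_of_ne_empty {v : Finset (Fin p)} (hv : v ≠ ∅) :
    anovaComp μ f v = μ[f | coordSigma Ω v] - ∑ w ∈ v.ssubsets, anovaComp μ f w := by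
  rw [anovaComp, if_neg hv, Finset.sum_attach]

theorem stronglyMeasurable_anovaComp (v : Finset (Fin p)) :
    StronglyMeasurable[coordSigma Ω v] (anovaComp μ f v) := by
  induction v using Finset.strongInduction with
  | _ v ih =>
    rcases eq_or_ne v ∅ with rfl | hv
    · rw [anovaComp_empty]
      exact stronglyMeasurable_const
    · rw [anovaComp_of_ne_empty hv]
      refine stronglyMeasurable_condExp.sub (Finset.stronglyMeasurable_sum _ fun w hw => ?_)
      have hwv := Finset.mem_ssubsets.mp hw
      exact (ih w hwv).mono (coordSigma_mono hwv.subset)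

theorem integrable_anovaComp [IsFiniteMeasure μ] (v : Finset (Fin p)) :
    Integrable (anovaComp μ f v) μ := by
  induction v using Finset.strongInduction with
  | _ v ih =>
    rcases eq_or_ne v ∅ with rfl | hv
    · rw [anovaComp_empty]
      exact integrable_const _
    · rw [anovaComp_of_ne_empty hv]
      exact integrable_condExp.sub
        (integrable_finsetSum' _ fun w hw => ih w (Finset.mem_ssubsets.mp hw))

theorem sum_powerset_anovaComp [IsProbabilityMeasure μ] (v : Finset (Fin p)) :
    ∑ w ∈ v.powerset, anovaComp μ f w = μ[f | coordSigma Ω v] := by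
  rcases eq_or_ne v ∅ with rfl | hv
  · rw [Finset.powerset_empty, Finset.sum_singleton, anovaComp_empty, coordSigma_empty,
      condExp_bot]
  · rw [← Finset.insert_erase (Finset.mem_powerset_self v),
      Finset.sum_insert (Finset.notMem_erase v _), ← Finset.ssubsets, anovaComp_of_ne_empty hv,
      sub_add_cancel]

theorem condExp_anovaComp_of_subset [IsFiniteMeasure μ] {v w : Finset (Fin p)} (hvw : v ⊆ w) :
    μ[anovaComp μ f v | coordSigma Ω w] = anovaComp μ f v :=
  condExp_of_stronglyMeasurable (coordSigma_le_pi w)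
    ((stronglyMeasurable_anovaComp v).mono (coordSigma_mono hvw)) (integrable_anovaComp v)

end anovaComp

section anovaComp_pi

variable {p : ℕ} {Ω : Fin p → Type*} [∀ i, MeasurableSpace (Ω i)]
  (ν : ∀ i, Measure (Ω i)) [∀ i, IsProbabilityMeasure (ν i)] (f : (∀ i, Ω i) → ℝ)

theorem condExp_anovaComp_pi_ae_eq_zero {v u : Finset (Fin p)} (hvu : ¬ v ⊆ u) :
    (Measure.pi ν)[anovaComp (Measure.pi ν) f v | coordSigma Ω u] =ᵐ[Measure.pi ν] 0 := by
  set μ := Measure.pi ν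
  induction v using Finset.strongInduction with
  | _ v ih =>
    have hv : v ≠ ∅ := by rintro rfl; exact hvu (Finset.empty_subset u)
    have hlower : ∑ w ∈ v.ssubsets, μ[anovaComp μ f w | coordSigma Ω u]
        =ᵐ[μ] μ[f | coordSigma Ω (u ∩ v)] := by
      rw [← sum_powerset_anovaComp, ← Finset.filter_ssubsets_subset_eq_powerset_inter hvu,
        Finset.sum_filter]
      refine eventuallyEq_sum fun w hw => ?_
      split_ifs with hwu
      · exact (condExp_anovaComp_of_subset hwu).eventuallyEq
      · exact ih w (Finset.mem_ssubsets.mp hw) hwu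
    calc μ[anovaComp μ f v | coordSigma Ω u]
        = μ[μ[f | coordSigma Ω v] - ∑ w ∈ v.ssubsets, anovaComp μ f w | coordSigma Ω u] := by
          rw [anovaComp_of_ne_empty hv]
      _ =ᵐ[μ] μ[μ[f | coordSigma Ω v] | coordSigma Ω u]
            - ∑ w ∈ v.ssubsets, μ[anovaComp μ f w | coordSigma Ω u] :=
          (condExp_sub integrable_condExp
            (integrable_finsetSum' _ fun w _ => integrable_anovaComp w) _).trans
          (.sub .rfl (condExp_finsetSum (fun w _ => integrable_anovaComp w) _))
      _ =ᵐ[μ] μ[f | coordSigma Ω (u ∩ v)] - μ[f | coordSigma Ω (u ∩ v)] :=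
          (condExp_condExp_coordSigma_pi ν f v u).sub hlower
      _ = 0 := sub_self _

end anovaComp_pi

theorem anovaComp_condexp_zero_of_indep_general
    {p : ℕ} (Ω : Fin p → Type*) [∀ i, MeasurableSpace (Ω i)]
    (ν : ∀ i, Measure (Ω i)) [∀ i, IsProbabilityMeasure (ν i)]
    (μ : Measure (∀ i, Ω i)) (hμ : μ = Measure.pi ν)
    (f : (∀ i, Ω i) → ℝ)
    (v : Finset (Fin p)) (ℓ : Fin p) (hℓ : ℓ ∈ v) :
    (μ[anovaComp μ f v | coordSigma Ω ({ℓ} : Finset (Fin p))ᶜ] =ᵐ[μ] 0) ∧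
    ∫ x, anovaComp μ f v x ∂μ = 0 := by
  subst hμ
  have hcond := condExp_anovaComp_pi_ae_eq_zero ν f (u := {ℓ}ᶜ)
    (fun hv => Finset.notMem_compl.mpr (Finset.mem_singleton_self ℓ) (hv hℓ))
  refine ⟨hcond, ?_⟩
  rw [← integral_condExp (coordSigma_le_pi _), integral_congr_ae hcond, integral_zero']

/-- ANOVA mean-zero property under independence: if `μ` is a product measure, then for
every nonempty `v` and every `ℓ ∈ v`, `E[f_v | σ(x_{∼ℓ})] = 0` a.e.; in particular
`E[f_v] = 0`. -/
theorem anovaComp_condexp_zero_of_indep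
    {p : ℕ} (hp : 1 ≤ p) (Ω : Fin p → Type*) [∀ i, MeasurableSpace (Ω i)]
    (ν : ∀ i, Measure (Ω i)) [∀ i, IsProbabilityMeasure (ν i)]
    (μ : Measure (∀ i, Ω i)) [IsProbabilityMeasure μ] (hμ : μ = Measure.pi ν)
    (f : (∀ i, Ω i) → ℝ) (hf : MemLp f 2 μ)
    (v : Finset (Fin p)) (hv : v.Nonempty) (ℓ : Fin p) (hℓ : ℓ ∈ v) :
    (μ[anovaComp μ f v | coordSigma Ω ({ℓ} : Finset (Fin p))ᶜ] =ᵐ[μ] 0) ∧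
    ∫ x, anovaComp μ f v x ∂μ = 0 :=
  anovaComp_condexp_zero_of_indep_general Ω ν μ hμ f v ℓ hℓ
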